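/- arXiv:1611.06574 — 2 statements merged into one kernel-verified Lean document; each statement's English description precedes it below -/
import Mathlib

section
/- Let k ≥ 3, let θ be a nontrivial equivalence relation on E_k, and let α be a prime affine relation on E_k. Let α₁ = {(a,b,c,d) ∈ α : (a,b) ∈ θ, (a,c) ∈ θ, (a,d) ∈ θ}. Then Pol(θ) ∩ Pol(α) ⊊ Pol(α₁) ⊊ Pol(θ). In particular, Pol(θ) ∩ Pol(α) is not maximal in Pol(θ). -/
/-- A finitary operation on `Fin k`: a pair of an arity `n` and a function
`(Fin n → Fin k) → Fin k`. -/
abbrev Ops (k : ℕ) := Σ n : ℕ, ((Fin n → Fin k) → Fin k)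

/-- The set of finitary operations preserving a binary relation `θ` on `Fin k`. -/
def PolB {k : ℕ} (θ : Set (Fin k × Fin k)) : Set (Ops k) :=
  {f | ∀ a b : Fin f.1 → Fin k, (∀ i, (a i, b i) ∈ θ) → (f.2 a, f.2 b) ∈ θ}

/-- The set of finitary operations preserving an `h`-ary relation `ρ` on `Fin k`. -/
def PolH {k h : ℕ} (ρ : Set (Fin h → Fin k)) : Set (Ops k) :=
  {f | ∀ M : Fin h → Fin f.1 → Fin k,
    (∀ i, (fun j => M j i) ∈ ρ) → (fun j => f.2 (M j)) ∈ ρ}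

/-- A clone: contains all projections and is closed under composition. -/
def IsClone {k : ℕ} (C : Set (Ops k)) : Prop :=
  (∀ (n : ℕ) (i : Fin n), (⟨n, fun x => x i⟩ : Ops k) ∈ C) ∧
  (∀ (n m : ℕ) (f : (Fin n → Fin k) → Fin k) (g : Fin n → (Fin m → Fin k) → Fin k),
    (⟨n, f⟩ : Ops k) ∈ C → (∀ i, (⟨m, g i⟩ : Ops k) ∈ C) →
    (⟨m, fun x => f fun i => g i x⟩ : Ops k) ∈ C)

/-- `C` is maximal in `D`: `C ⊊ D` and no clone lies strictly between them. -/
def MaximalIn {k : ℕ} (C D : Set (Ops k)) : Prop :=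
  C ⊂ D ∧ ∀ F : Set (Ops k), IsClone F → ¬(C ⊂ F ∧ F ⊂ D)

/-- `θ` is an equivalence relation (as a set of pairs). -/
def IsEquivRel {A : Type*} (θ : Set (A × A)) : Prop :=
  (∀ a, (a, a) ∈ θ) ∧ (∀ a b, (a, b) ∈ θ → (b, a) ∈ θ) ∧
    (∀ a b c, (a, b) ∈ θ → (b, c) ∈ θ → (a, c) ∈ θ)

/-- The diagonal relation `Δ` on `Fin k`. -/
def diag (k : ℕ) : Set (Fin k × Fin k) := {p | p.1 = p.2}

/-- A nontrivial equivalence relation: `Δ ⊊ θ ⊊ (Fin k)²`. -/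
def NontrivEquiv {k : ℕ} (θ : Set (Fin k × Fin k)) : Prop :=
  IsEquivRel θ ∧ diag k ⊂ θ ∧ θ ⊂ Set.univ

/-- Relational composition `α ∘ β = {(a,c) : ∃ b, (a,b) ∈ α ∧ (b,c) ∈ β}`. -/
def relComp {k : ℕ} (α β : Set (Fin k × Fin k)) : Set (Fin k × Fin k) :=
  {p | ∃ b, (p.1, b) ∈ α ∧ (b, p.2) ∈ β}

/-- The set of equivalence classes of `θ`. -/
def classesOf {A : Type*} (θ : Set (A × A)) : Set (Set A) :=
  {S | ∃ a : A, S = {b | (a, b) ∈ θ}}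

/-- Totally reflexive: every tuple with a repeated entry is in `ρ`. -/
def TotallyReflexive {k h : ℕ} (ρ : Set (Fin h → Fin k)) : Prop :=
  ∀ v : Fin h → Fin k, (∃ i j : Fin h, i ≠ j ∧ v i = v j) → v ∈ ρ

/-- Totally symmetric: closed under all permutations of coordinates. -/
def TotallySymmetric {k h : ℕ} (ρ : Set (Fin h → Fin k)) : Prop :=
  ∀ (v : Fin h → Fin k) (σ : Equiv.Perm (Fin h)), v ∈ ρ → v ∘ ⇑σ ∈ ρ

/-- The center of an `h`-ary relation: elements `a` such that every tuple whose
first coordinate is `a` lies in `ρ`. -/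
def center {k h : ℕ} (ρ : Set (Fin h → Fin k)) : Set (Fin k) :=
  {a | ∀ v : Fin h → Fin k, (∀ i : Fin h, (i : ℕ) = 0 → v i = a) → v ∈ ρ}

/-- An `h`-ary central relation. -/
def IsCentralRel {k h : ℕ} (ρ : Set (Fin h → Fin k)) : Prop :=
  ρ ≠ Set.univ ∧ TotallyReflexive ρ ∧ TotallySymmetric ρ ∧ (center ρ).Nonempty

/-- `η = {(u₁,…,u_h) : (u₁,u₂) ∈ θ}` (0-indexed: first two coordinates θ-related). -/
def eta {k : ℕ} (h : ℕ) (θ : Set (Fin k × Fin k)) : Set (Fin h → Fin k) :=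
  {v | ∀ i j : Fin h, (i : ℕ) = 0 → (j : ℕ) = 1 → (v i, v j) ∈ θ}

/-- `ρ_{l,θ}`: tuples whose coordinates from position `l` onwards can be moved
inside their θ-classes so as to land in `ρ` (0-indexed coordinates). -/
def rhoTh {k h : ℕ} (l : ℕ) (θ : Set (Fin k × Fin k)) (ρ : Set (Fin h → Fin k)) :
    Set (Fin h → Fin k) :=
  {a | ∃ u : Fin h → Fin k, (∀ j : Fin h, l ≤ (j : ℕ) → (u j, a j) ∈ θ) ∧
    (fun j : Fin h => if (j : ℕ) < l then a j else u j) ∈ ρ}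

/-- `ρ` is θ-closed: `ρ = ρ_{0,θ}`. -/
def ThetaClosed {k h : ℕ} (θ : Set (Fin k × Fin k)) (ρ : Set (Fin h → Fin k)) : Prop :=
  ρ = rhoTh 0 θ ρ

/-- `γ_σ = {(a_{σ(1)},…,a_{σ(h)}) : a ∈ γ}`. -/
def permuted {k h : ℕ} (σ : Equiv.Perm (Fin h)) (γ : Set (Fin h → Fin k)) :
    Set (Fin h → Fin k) :=
  {w | w ∘ ⇑σ.symm ∈ γ}

/-- A transversal of order `l` for the θ-classes: a system of representatives
(pairwise θ-unrelated, meeting every class) such that every tuple whose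
coordinates from position `l` onwards lie in `T` belongs to `ρ`. -/
def IsTransversal {k h : ℕ} (θ : Set (Fin k × Fin k)) (ρ : Set (Fin h → Fin k)) (l : ℕ)
    (T : Set (Fin k)) : Prop :=
  (∀ u ∈ T, ∀ v ∈ T, u ≠ v → (u, v) ∉ θ) ∧
  (∀ a : Fin k, ∃ u ∈ T, (a, u) ∈ θ) ∧
  (∀ w : Fin h → Fin k, (∀ j : Fin h, l ≤ (j : ℕ) → w j ∈ T) → w ∈ ρ)

/-- `ρ` is weakly θ-closed of order `l` (`1 ≤ l ≤ h-1`). -/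
def WeaklyThetaClosed {k h : ℕ} (θ : Set (Fin k × Fin k)) (ρ : Set (Fin h → Fin k))
    (l : ℕ) : Prop :=
  1 ≤ l ∧ l ≤ h - 1 ∧ (∃ T : Set (Fin k), IsTransversal θ ρ (l - 1) T) ∧
  ρ = ⋂ σ : Equiv.Perm (Fin h), permuted σ (rhoTh l θ ρ)

/-- Type I: `η ⊆ ρ` and every θ-class contains a central element of `ρ`. -/
def TypeI {k h : ℕ} (θ : Set (Fin k × Fin k)) (ρ : Set (Fin h → Fin k)) : Prop :=
  eta h θ ⊆ ρ ∧ ∀ a : Fin k, ∃ c : Fin k, (a, c) ∈ θ ∧ c ∈ center ρ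

/-- Type II: `ρ` is θ-closed. -/
def TypeII {k h : ℕ} (θ : Set (Fin k × Fin k)) (ρ : Set (Fin h → Fin k)) : Prop :=
  ThetaClosed θ ρ

/-- Type III: `ρ` is weakly θ-closed of some order and `η ⊆ ρ`. -/
def TypeIII {k h : ℕ} (θ : Set (Fin k × Fin k)) (ρ : Set (Fin h → Fin k)) : Prop :=
  (∃ l : ℕ, WeaklyThetaClosed θ ρ l) ∧ eta h θ ⊆ ρ

/-- `τ` is a diagonal relation through `θ`. -/
def IsDiagonal {k h : ℕ} (θ : Set (Fin k × Fin k)) (τ : Set (Fin h → Fin k)) : Prop :=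
  ∃ (ε₁ : Setoid (Fin h)) (ε₂ : Set (Fin h × Fin h)),
    (∀ p ∈ ε₂, (∀ j, ε₁.r p.1 j → p.1 ≤ j) ∧ (∀ j, ε₁.r p.2 j → p.2 ≤ j)) ∧
    (∀ i : Fin h, (∀ j, ε₁.r i j → i ≤ j) → (i, i) ∈ ε₂) ∧
    (∀ i j, (i, j) ∈ ε₂ → (j, i) ∈ ε₂) ∧
    (∀ i j l, (i, j) ∈ ε₂ → (j, l) ∈ ε₂ → (i, l) ∈ ε₂) ∧
    τ = {a | (∀ i j, ε₁.r i j → a i = a j) ∧ (∀ i j, (i, j) ∈ ε₂ → (a i, a j) ∈ θ)}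

/-- `ρ^l_{0,θ}`: `l`-tuples which can be moved inside their θ-classes so that
every `h`-tuple with all entries among the moved elements lies in `ρ`. -/
def rhoPow {k h : ℕ} (l : ℕ) (θ : Set (Fin k × Fin k)) (ρ : Set (Fin h → Fin k)) :
    Set (Fin l → Fin k) :=
  {u | ∃ e : Fin l → Fin k, (∀ i, (e i, u i) ∈ θ) ∧
    ∀ w : Fin h → Fin k, (∀ j, ∃ i, w j = e i) → w ∈ ρ}

/-- An `h`-regular family of equivalence relations. -/
def IsHRegFamily {A : Type*} (h : ℕ) {m : ℕ} (T : Fin m → Set (A × A)) : Prop :=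
  (∀ i, IsEquivRel (T i)) ∧
  (∀ i, (classesOf (T i)).ncard = h) ∧
  (∀ x : Fin m → A, (⋂ i, {b | (x i, b) ∈ T i}).Nonempty)

/-- The `h`-regular relation determined by the family `T`: tuples whose set of
components meets at most `h-1` classes of each member of the family. -/
def hRegRel {A : Type*} (h : ℕ) {m : ℕ} (T : Fin m → Set (A × A)) : Set (Fin h → A) :=
  {a | ∀ i : Fin m, {S ∈ classesOf (T i) | ∃ j : Fin h, a j ∈ S}.ncard ≤ h - 1}

/-- `ρ` is an `h`-regular relation: determined by some `h`-regular family. -/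
def IsHRegularRel {A : Type*} (h : ℕ) (ρ : Set (Fin h → A)) : Prop :=
  ∃ m : ℕ, 1 ≤ m ∧ ∃ T : Fin m → Set (A × A), IsHRegFamily h T ∧ ρ = hRegRel h T

/-- `n`-fold sum of `a` with respect to an addition `add` and zero `e`. -/
def nIter {k : ℕ} (add : Fin k → Fin k → Fin k) (e : Fin k) (a : Fin k) : ℕ → Fin k
  | 0 => e
  | n + 1 => add a (nIter add e a n)

/-!
Every polymorphism of `θ` and `α` preserves the θ-block part `α₁` of `α`, and since `α₁`
contains every `(x, y, x, y)` with `x θ y`, its polymorphisms preserve `θ`. Both inclusions are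
strict: the retraction of `E_k` onto one θ-class (identity on the class, constant outside)
preserves `α₁` but not `α`, and a binary operation taking only two θ-related values `a ≠ b`
preserves `θ` but not `α₁`. As `Pol(α₁)` is a clone, `Pol(θ) ∩ Pol(α)` is not maximal.
-/

section Algebra

variable {A : Type*} {add : A → A → A} {e : A}

theorem add_left_cancel_of_addCommGroup_axioms (hcomm : ∀ a b, add a b = add b a)
    (hassoc : ∀ a b c, add (add a b) c = add a (add b c)) (hzero : ∀ a, add e a = a)
    (hinv : ∀ a, ∃ b, add a b = e) {x y z : A} (h : add x y = add x z) : y = z := by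
  obtain ⟨x', hx'⟩ := hinv x
  have hx'x : add x' x = e := (hcomm x' x).trans hx'
  calc y = add (add x' x) y := by rw [hx'x, hzero]
    _ = add x' (add x z) := by rw [hassoc, h]
    _ = z := by rw [← hassoc, hx'x, hzero]

theorem exists_add_eq_of_addCommGroup_axioms
    (hassoc : ∀ a b c, add (add a b) c = add a (add b c)) (hzero : ∀ a, add e a = a)
    (hinv : ∀ a, ∃ b, add a b = e) (x y : A) : ∃ z, add x z = y := by
  obtain ⟨x', hx'⟩ := hinv x
  exact ⟨add x' y, by rw [← hassoc, hx', hzero]⟩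

end Algebra

section Relations

variable {k : ℕ}

def affineRel (add : Fin k → Fin k → Fin k) : Set (Fin 4 → Fin k) :=
  {v | add (v 0) (v 1) = add (v 2) (v 3)}

/-- The paper's `α₁` is `classRestrict θ α`. -/
def classRestrict (θ : Set (Fin k × Fin k)) (ρ : Set (Fin 4 → Fin k)) : Set (Fin 4 → Fin k) :=
  {v ∈ ρ | (v 0, v 1) ∈ θ ∧ (v 0, v 2) ∈ θ ∧ (v 0, v 3) ∈ θ}

theorem NontrivEquiv.exists_pair_and_outsider {θ : Set (Fin k × Fin k)} (hθ : NontrivEquiv θ) :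
    ∃ a b g : Fin k, (a, b) ∈ θ ∧ a ≠ b ∧ (a, g) ∉ θ := by
  obtain ⟨⟨-, hsym, htrans⟩, hdiag, huniv⟩ := hθ
  obtain ⟨⟨a, b⟩, hab, hne⟩ := Set.exists_of_ssubset hdiag
  obtain ⟨⟨c, d⟩, -, hcd⟩ := Set.exists_of_ssubset huniv
  by_cases hac : (a, c) ∈ θ
  · exact ⟨a, b, d, hab, hne, fun had => hcd (htrans c a d (hsym a c hac) had)⟩
  · exact ⟨a, b, c, hab, hne, hac⟩

theorem rel_of_mem_classRestrict {θ : Set (Fin k × Fin k)} {ρ : Set (Fin 4 → Fin k)}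
    (hrefl : ∀ a, (a, a) ∈ θ) {v : Fin 4 → Fin k} (hv : v ∈ classRestrict θ ρ) (j : Fin 4) :
    (v 0, v j) ∈ θ := by
  obtain ⟨-, h1, h2, h3⟩ := hv
  fin_cases j
  exacts [hrefl _, h1, h2, h3]

end Relations

section Clones

variable {k : ℕ}

theorem isClone_polH {h : ℕ} (ρ : Set (Fin h → Fin k)) : IsClone (PolH ρ) :=
  ⟨fun _ i _ hM => hM i, fun _ _ _ g hf hg M hM => hf (fun j i => g i (M j)) (fun i => hg i M hM)⟩

theorem not_maximalIn_of_clone_between {C F D : Set (Ops k)} (hF : IsClone F)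
    (hCF : C ⊂ F) (hFD : F ⊂ D) : ¬ MaximalIn C D :=
  fun hmax => hmax.2 F hF ⟨hCF, hFD⟩

theorem polB_inter_polH_subset_polH_classRestrict (θ : Set (Fin k × Fin k))
    (ρ : Set (Fin 4 → Fin k)) : PolB θ ∩ PolH ρ ⊆ PolH (classRestrict θ ρ) := by
  rintro f ⟨hfθ, hfρ⟩ M hM
  exact ⟨hfρ M fun i => (hM i).1, hfθ _ _ fun i => (hM i).2.1,
    hfθ _ _ fun i => (hM i).2.2.1, hfθ _ _ fun i => (hM i).2.2.2⟩

theorem polH_classRestrict_subset_polB {θ : Set (Fin k × Fin k)} {ρ : Set (Fin 4 → Fin k)}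
    (hrefl : ∀ a, (a, a) ∈ θ) (hρ : ∀ x y, ![x, y, x, y] ∈ ρ) :
    PolH (classRestrict θ ρ) ⊆ PolB θ := by
  intro f hf x y hxy
  exact (hf (fun j i => ![x i, y i, x i, y i] j) fun i => ⟨hρ _ _, hxy i, hrefl _, hxy i⟩).2.1

def unaryOp (u : Fin k → Fin k) : Ops k :=
  ⟨1, fun x => u (x 0)⟩

theorem unaryOp_mem_polH_iff {h : ℕ} {ρ : Set (Fin h → Fin k)} {u : Fin k → Fin k} :
    unaryOp u ∈ PolH ρ ↔ ∀ v ∈ ρ, u ∘ v ∈ ρ :=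
  ⟨fun hu v hv => hu (fun j _ => v j) fun _ => hv, fun hu _ hM => hu _ (hM (0 : Fin 1))⟩

open Classical in
noncomputable def classRetraction (θ : Set (Fin k × Fin k)) (a : Fin k) : Fin k → Fin k :=
  fun x => if (a, x) ∈ θ then x else a

theorem classRetraction_of_mem {θ : Set (Fin k × Fin k)} {a x : Fin k} (h : (a, x) ∈ θ) :
    classRetraction θ a x = x :=
  if_pos h

theorem classRetraction_of_not_mem {θ : Set (Fin k × Fin k)} {a x : Fin k} (h : (a, x) ∉ θ) :
    classRetraction θ a x = a :=
  if_neg h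

theorem comp_classRetraction_mem_classRestrict {θ : Set (Fin k × Fin k)}
    {ρ : Set (Fin 4 → Fin k)} (hθ : IsEquivRel θ) {a : Fin k} (hρ : (fun _ => a) ∈ ρ)
    {v : Fin 4 → Fin k} (hv : v ∈ classRestrict θ ρ) :
    classRetraction θ a ∘ v ∈ classRestrict θ ρ := by
  obtain ⟨hrefl, hsym, htrans⟩ := hθ
  have hclass (j : Fin 4) : (a, v j) ∈ θ ↔ (a, v 0) ∈ θ :=
    ⟨fun h => htrans _ _ _ h (hsym _ _ (rel_of_mem_classRestrict hrefl hv j)),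
      fun h => htrans _ _ _ h (rel_of_mem_classRestrict hrefl hv j)⟩
  by_cases h0 : (a, v 0) ∈ θ
  · have hid : classRetraction θ a ∘ v = v :=
      funext fun j => classRetraction_of_mem ((hclass j).2 h0)
    rwa [hid]
  · have hconst : classRetraction θ a ∘ v = fun _ => a :=
      funext fun j => classRetraction_of_not_mem fun h => h0 ((hclass j).1 h)
    rw [hconst]
    exact ⟨hρ, hrefl a, hrefl a, hrefl a⟩

variable {add : Fin k → Fin k → Fin k}

/-- With `g + s = a + b`, the column `(a, b, g, s) ∈ α` is sent to `(a, b, a, s or a)`,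
which lies in `α` only if `b = s` (forcing `g = a`) or `b = a`. -/
theorem classRetraction_not_mem_polH_affineRel {θ : Set (Fin k × Fin k)}
    (hrefl : ∀ a, (a, a) ∈ θ) (hcomm : ∀ a b, add a b = add b a)
    (hcancel : ∀ {x y z}, add x y = add x z → y = z) (hsolve : ∀ x y, ∃ z, add x z = y)
    {a b g : Fin k} (hab : (a, b) ∈ θ) (hne : a ≠ b) (hag : (a, g) ∉ θ) :
    unaryOp (classRetraction θ a) ∉ PolH (affineRel add) := by
  intro hf
  obtain ⟨s, hs⟩ := hsolve g (add a b)
  have h : add (classRetraction θ a a) (classRetraction θ a b) =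
      add (classRetraction θ a g) (classRetraction θ a s) :=
    unaryOp_mem_polH_iff.1 hf ![a, b, g, s] hs.symm
  rw [classRetraction_of_mem (hrefl a), classRetraction_of_mem hab,
    classRetraction_of_not_mem hag] at h
  by_cases has : (a, s) ∈ θ
  · rw [classRetraction_of_mem has] at h
    have hbs : b = s := hcancel h
    subst hbs
    have hga : g = a := hcancel (x := b) (by rw [hcomm b g, hs, hcomm])
    exact hag (hga ▸ hrefl a)
  · rw [classRetraction_of_not_mem has] at h
    exact hne (hcancel h).symm

def binaryIndicator (a b : Fin k) : Ops k :=
  ⟨2, fun x => if x 0 = a ∧ x 1 = b then b else a⟩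

theorem binaryIndicator_mem_polB {θ : Set (Fin k × Fin k)} (hθ : IsEquivRel θ) {a b : Fin k}
    (hab : (a, b) ∈ θ) : binaryIndicator a b ∈ PolB θ := by
  obtain ⟨hrefl, hsym, -⟩ := hθ
  intro x y _
  simp only [binaryIndicator]
  split_ifs
  exacts [hrefl b, hsym _ _ hab, hab, hrefl a]

/-- The columns `(a, b, b, a)` and `(a, b, a, b)` are sent to `(a, a, a, b)`. -/
theorem binaryIndicator_not_mem_polH_classRestrict_affineRel {θ : Set (Fin k × Fin k)}
    (hrefl : ∀ a, (a, a) ∈ θ) (hcomm : ∀ a b, add a b = add b a)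
    (hcancel : ∀ {x y z}, add x y = add x z → y = z) {a b : Fin k} (hab : (a, b) ∈ θ)
    (hne : a ≠ b) : binaryIndicator a b ∉ PolH (classRestrict θ (affineRel add)) := by
  intro hf
  have h := hf ![![a, a], ![b, b], ![b, a], ![a, b]] fun i => by
    fin_cases i
    exacts [⟨hcomm a b, hab, hab, hrefl a⟩, ⟨rfl, hab, hrefl a, hab⟩]
  have h' : add a a = add a b := by
    simpa [affineRel, binaryIndicator, hne, hne.symm] using h.1
  exact hne (hcancel h')

end Clones

theorem stmt1_general (k : ℕ)
    (θ : Set (Fin k × Fin k)) (hθ : NontrivEquiv θ)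
    (add : Fin k → Fin k → Fin k) (e : Fin k)
    (hcomm : ∀ a b, add a b = add b a)
    (hassoc : ∀ a b c, add (add a b) c = add a (add b c))
    (hzero : ∀ a, add e a = a)
    (hinv : ∀ a, ∃ b, add a b = e)
    (α : Set (Fin 4 → Fin k))
    (hα : α = {v | add (v 0) (v 1) = add (v 2) (v 3)})
    (α₁ : Set (Fin 4 → Fin k))
    (hα₁ : α₁ = {v ∈ α | (v 0, v 1) ∈ θ ∧ (v 0, v 2) ∈ θ ∧ (v 0, v 3) ∈ θ}) :
    (PolB θ ∩ PolH α ⊂ PolH α₁) ∧ (PolH α₁ ⊂ PolB θ) ∧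
      ¬ MaximalIn (PolB θ ∩ PolH α) (PolB θ) := by
  obtain ⟨a, b, g, hab, hne, hag⟩ := hθ.exists_pair_and_outsider
  have hequiv : IsEquivRel θ := hθ.1
  have hcancel : ∀ {x y z}, add x y = add x z → y = z :=
    add_left_cancel_of_addCommGroup_axioms hcomm hassoc hzero hinv
  change α = affineRel add at hα
  change α₁ = classRestrict θ α at hα₁
  subst hα hα₁
  have hlower : PolB θ ∩ PolH (affineRel add) ⊂ PolH (classRestrict θ (affineRel add)) :=
    (Set.ssubset_iff_of_subset (polB_inter_polH_subset_polH_classRestrict _ _)).2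
      ⟨_, unaryOp_mem_polH_iff.2 fun _ =>
        comp_classRetraction_mem_classRestrict (ρ := affineRel add) hequiv rfl, fun hf =>
        classRetraction_not_mem_polH_affineRel hequiv.1 hcomm hcancel
          (exists_add_eq_of_addCommGroup_axioms hassoc hzero hinv) hab hne hag hf.2⟩
  have hupper : PolH (classRestrict θ (affineRel add)) ⊂ PolB θ :=
    (Set.ssubset_iff_of_subset (polH_classRestrict_subset_polB hequiv.1 fun _ _ => rfl)).2
      ⟨_, binaryIndicator_mem_polB hequiv hab,
        binaryIndicator_not_mem_polH_classRestrict_affineRel hequiv.1 hcomm hcancel hab hne⟩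
  exact ⟨hlower, hupper, not_maximalIn_of_clone_between (isClone_polH _) hlower hupper⟩

/-- For a nontrivial equivalence relation `θ` and a prime affine relation `α`
on `E_k` (`k ≥ 3`), `Pol(θ) ∩ Pol(α) ⊊ Pol(α₁) ⊊ Pol(θ)`; in particular
`Pol(θ) ∩ Pol(α)` is not maximal in `Pol(θ)`. -/
theorem stmt1 (k : ℕ) (hk : 3 ≤ k)
    (θ : Set (Fin k × Fin k)) (hθ : NontrivEquiv θ)
    (add : Fin k → Fin k → Fin k) (e : Fin k)
    (hcomm : ∀ a b, add a b = add b a)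
    (hassoc : ∀ a b c, add (add a b) c = add a (add b c))
    (hzero : ∀ a, add e a = a)
    (hinv : ∀ a, ∃ b, add a b = e)
    (p : ℕ) (hp : p.Prime)
    (hord : ∀ a, nIter add e a p = e)
    (α : Set (Fin 4 → Fin k))
    (hα : α = {v | add (v 0) (v 1) = add (v 2) (v 3)})
    (α₁ : Set (Fin 4 → Fin k))
    (hα₁ : α₁ = {v ∈ α | (v 0, v 1) ∈ θ ∧ (v 0, v 2) ∈ θ ∧ (v 0, v 3) ∈ θ}) :
    (PolB θ ∩ PolH α ⊂ PolH α₁) ∧ (PolH α₁ ⊂ PolB θ) ∧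
      ¬ MaximalIn (PolB θ ∩ PolH α) (PolB θ) :=
  stmt1_general k θ hθ add e hcomm hassoc hzero hinv α hα α₁ hα₁
end

section
/- Let ρ and θ be two nontrivial equivalence relations on E_k which are incomparable (neither is contained in the other). If ρ ∩ θ ≠ Δ, then Pol(θ) ∩ Pol(ρ) ⊊ Pol(θ) ∩ Pol(ρ ∩ θ) ⊊ Pol(θ), and Pol(θ) ∩ Pol(ρ ∩ θ) is maximal in Pol(θ). In particular, Pol(θ) ∩ Pol(ρ) is not maximal in Pol(θ). -/
open scoped Classical

lemma polB_isClone {k : ℕ} (γ : Set (Fin k × Fin k)) : IsClone (PolB γ) :=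
  ⟨fun _ i a b h => h i, fun _ _ f _ hf hg a b h => hf _ _ fun i => hg i a b h⟩

lemma inter_isClone {k : ℕ} {C D : Set (Ops k)} (hC : IsClone C) (hD : IsClone D) :
    IsClone (C ∩ D) :=
  ⟨fun n i => ⟨hC.1 n i, hD.1 n i⟩, fun n m f g hf hg =>
    ⟨hC.2 n m f g hf.1 (fun i => (hg i).1), hD.2 n m f g hf.2 fun i => (hg i).2⟩⟩

lemma key_gen {k : ℕ} (θ σ : Set (Fin k × Fin k))
    (hθE : IsEquivRel θ) (hσE : IsEquivRel σ) (hsub : σ ⊆ θ)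
    (F : Set (Ops k)) (hF : IsClone F) (hCF : PolB θ ∩ PolB σ ⊆ F)
    (f : Ops k) (hfF : f ∈ F) (hfθ : f ∈ PolB θ) (hfσ : f ∉ PolB σ) :
    PolB θ ⊆ F := by
  obtain ⟨hθr, hθs, hθt⟩ := hθE
  obtain ⟨hσr, hσs, hσt⟩ := hσE
  simp only [PolB, Set.mem_setOf_eq] at hfσ
  push_neg at hfσ
  obtain ⟨a, b, hab, hnab⟩ := hfσ
  set p := f.2 a with hp
  set q := f.2 b with hq
  have hpq : (p, q) ∈ θ := hfθ a b fun i => hsub (hab i)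
  have hqpn : (q, p) ∉ σ := fun h => hnab (hσs _ _ h)
  have hppσ : (p, p) ∈ σ := hσr p
  haveI : Nonempty (Fin k) := ⟨p⟩
  -- canonical representative of each θ-class
  have hclsne : ∀ y : Fin k, (Finset.univ.filter (fun z => (y, z) ∈ θ)).Nonempty :=
    fun y => ⟨y, by simp [hθr y]⟩
  set r : Fin k → Fin k := fun y => (Finset.univ.filter (fun z => (y, z) ∈ θ)).min' (hclsne y)
    with hrdef
  have hrθ : ∀ y, (y, r y) ∈ θ := by
    intro y
    have := Finset.min'_mem _ (hclsne y)
    simpa using this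
  have hrc : ∀ y y', (y, y') ∈ θ → r y = r y' := by
    intro y y' h
    have hfe : (Finset.univ.filter (fun z => (y, z) ∈ θ))
        = (Finset.univ.filter fun z => (y', z) ∈ θ) := by
      ext z
      simp only [Finset.mem_filter, Finset.mem_univ, true_and]
      exact ⟨fun hz => hθt _ _ _ (hθs _ _ h) hz, fun hz => hθt _ _ _ h hz⟩
    simp only [hrdef, hfe]
  -- Step A : unary point masks with values p, q
  have hchi : ∀ c : Fin k,
      (⟨1, fun x : Fin 1 → Fin k => if x 0 = c then p else q⟩ : Ops k) ∈ F := by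
    intro c
    have hti : ∀ i, (⟨1, fun x : Fin 1 → Fin k => if x 0 = c then a i else b i⟩ : Ops k)
        ∈ PolB θ ∩ PolB σ := by
      intro i
      have h4 : ∀ u v : Fin 1 → Fin k,
          ((if u 0 = c then a i else b i : Fin k), (if v 0 = c then a i else b i : Fin k)) ∈ σ := by
        intro u v
        split_ifs
        · exact hσr _
        · exact hab i
        · exact hσs _ _ (hab i)
        · exact hσr _
      exact ⟨fun u v _ => hsub (h4 u v), fun u v _ => h4 u v⟩
    have hmem := hF.2 f.1 1 f.2 (fun i => fun x : Fin 1 → Fin k => if x 0 = c then a i else b i)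
      hfF (fun i => hCF (hti i))
    have heq : (fun x : Fin 1 → Fin k => f.2 fun i => if x 0 = c then a i else b i)
        = fun x : Fin 1 → Fin k => if x 0 = c then p else q := by
      funext x
      by_cases h : x 0 = c
      · simp only [if_pos h, hp]
      · simp only [if_neg h, hq]
    rw [← heq]
    exact hmem
  -- Step B : n-ary point masks
  have hmask : ∀ (n : ℕ) (c : Fin n → Fin k),
      (⟨n, fun x : Fin n → Fin k => if x = c then p else q⟩ : Ops k) ∈ F := by
    intro n c
    have hcoord : ∀ j : Fin n,
        (⟨n, fun x : Fin n → Fin k => if x j = c j then p else q⟩ : Ops k) ∈ F := by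
      intro j
      have := hF.2 1 n (fun y : Fin 1 → Fin k => if y 0 = c j then p else q)
        (fun _ => fun x : Fin n → Fin k => x j) (hchi (c j)) (fun _ => hF.1 n j)
      exact this
    have hA : (⟨n, fun y : Fin n → Fin k => if ∀ j, (y j, p) ∈ σ then p else q⟩ : Ops k)
        ∈ PolB θ ∩ PolB σ := by
      constructor
      · intro u v _
        show ((if ∀ j, (u j, p) ∈ σ then p else q : Fin k),
          (if ∀ j, (v j, p) ∈ σ then p else q : Fin k)) ∈ θ
        split_ifs
        · exact hθr _
        · exact hpq
        · exact hθs _ _ hpq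
        · exact hθr _
      · intro u v huv
        show ((if ∀ j, (u j, p) ∈ σ then p else q : Fin k),
          (if ∀ j, (v j, p) ∈ σ then p else q : Fin k)) ∈ σ
        have hiff : (∀ j, (u j, p) ∈ σ) ↔ (∀ j, (v j, p) ∈ σ) :=
          forall_congr' fun j => ⟨fun h => hσt _ _ _ (hσs _ _ (huv j)) h,
            fun h => hσt _ _ _ (huv j) h⟩
        by_cases h : ∀ j, (u j, p) ∈ σ
        · rw [if_pos h, if_pos (hiff.mp h)]; exact hσr p
        · rw [if_neg h, if_neg fun h' => h (hiff.mpr h')]; exact hσr q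
    have hcomp := hF.2 n n (fun y : Fin n → Fin k => if ∀ j, (y j, p) ∈ σ then p else q)
      (fun j => fun x : Fin n → Fin k => if x j = c j then p else q) (hCF hA) hcoord
    have heq : (fun x : Fin n → Fin k =>
        if ∀ j, ((if x j = c j then p else q : Fin k), p) ∈ σ then p else q)
        = fun x : Fin n → Fin k => if x = c then p else q := by
      funext x
      by_cases hx : x = c
      · subst hx
        rw [if_pos rfl, if_pos]
        intro j; rw [if_pos rfl]; exact hppσ
      · rw [if_neg hx, if_neg]
        intro hall
        apply hx
        funext j
        by_contra hj
        have := hall j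
        rw [if_neg hj] at this
        exact hqpn this
    rw [← heq]
    exact hcomp
  -- Step C : any operation whose range lies in a single θ-class is in F
  have hlayer1 : ∀ (n : ℕ) (G : (Fin n → Fin k) → Fin k),
      (∀ x y, (G x, G y) ∈ θ) → (⟨n, G⟩ : Ops k) ∈ F := by
    intro n G hGθ
    have hNpos : 0 < Fintype.card (Fin n → Fin k) := Fintype.card_pos
    set N := Fintype.card (Fin n → Fin k) with hN
    set ev : Fin N ≃ (Fin n → Fin k) := (Fintype.equivFin (Fin n → Fin k)).symm with hev
    set M : (Fin N → Fin k) → Fin k := fun y =>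
      if h : (Finset.univ.filter (fun j => (y j, p) ∈ σ)).Nonempty
      then G (ev ((Finset.univ.filter (fun j => (y j, p) ∈ σ)).min' h))
      else G (ev ⟨0, hNpos⟩) with hM
    have hMmem : (⟨N, M⟩ : Ops k) ∈ PolB θ ∩ PolB σ := by
      constructor
      · intro u v _
        show (M u, M v) ∈ θ
        simp only [hM]
        split_ifs <;> exact hGθ _ _
      · intro u v huv
        show (M u, M v) ∈ σ
        have hfe : (Finset.univ.filter (fun j => (u j, p) ∈ σ))
            = (Finset.univ.filter (fun j => (v j, p) ∈ σ)) := by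
          ext j
          simp only [Finset.mem_filter, Finset.mem_univ, true_and]
          exact ⟨fun h => hσt _ _ _ (hσs _ _ (huv j)) h, fun h => hσt _ _ _ (huv j) h⟩
        have hMe : M u = M v := by simp only [hM, hfe]
        rw [hMe]; exact hσr _
    have hcomp := hF.2 N n M (fun j => fun x : Fin n → Fin k => if x = ev j then p else q)
      (hCF hMmem) (fun j => hmask n (ev j))
    have heq : (fun x : Fin n → Fin k => M fun j => if x = ev j then p else q) = G := by
      funext x
      have hfe : (Finset.univ.filter
          (fun j : Fin N => ((if x = ev j then p else q : Fin k), p) ∈ σ))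
          = {ev.symm x} := by
        ext j
        simp only [Finset.mem_filter, Finset.mem_univ, true_and, Finset.mem_singleton]
        constructor
        · intro h
          by_contra hj
          have hx : x ≠ ev j := fun e => hj (by rw [e, Equiv.symm_apply_apply])
          rw [if_neg hx] at h
          exact hqpn h
        · intro h
          subst h
          rw [if_pos (Equiv.apply_symm_apply ev x).symm]
          exact hppσ
      simp only [hM, hfe]
      rw [dif_pos (Finset.singleton_nonempty _)]
      rw [Finset.min'_singleton, Equiv.apply_symm_apply]
    rw [← heq]
    exact hcomp
  -- Step D : every θ-preserving operation is in F
  intro g hg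
  obtain ⟨n, G⟩ := g
  set δ : (Fin n → Fin k) → Fin k := fun x => r (G (fun i => r (x i))) with hδ
  have hδeq : ∀ u v : Fin n → Fin k, (∀ i, (u i, v i) ∈ θ) → δ u = δ v := by
    intro u v h
    simp only [hδ]
    have : (fun i => r (u i)) = fun i => r (v i) := funext fun i => hrc _ _ (h i)
    rw [this]
  have hδC : (⟨n, δ⟩ : Ops k) ∈ PolB θ ∩ PolB σ := by
    constructor
    · intro u v h
      show (δ u, δ v) ∈ θ
      rw [hδeq u v h]; exact hθr _
    · intro u v h
      show (δ u, δ v) ∈ σ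
      rw [hδeq u v fun i => hsub (h i)]; exact hσr _
  have hGt : ∀ t : Fin k, (⟨n, fun x : Fin n → Fin k =>
      if (G x, t) ∈ θ then G x else t⟩ : Ops k) ∈ F := by
    intro t
    apply hlayer1
    intro x y
    have h1 : ((if (G x, t) ∈ θ then G x else t : Fin k), t) ∈ θ := by
      split_ifs with h
      · exact h
      · exact hθr t
    have h2 : ((if (G y, t) ∈ θ then G y else t : Fin k), t) ∈ θ := by
      split_ifs with h
      · exact h
      · exact hθr t
    exact hθt _ _ _ h1 (hθs _ _ h2)
  set s : (Fin (k + 1) → Fin k) → Fin k := fun w => w (Fin.succ (r (w 0))) with hs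
  have hsC : (⟨k + 1, s⟩ : Ops k) ∈ PolB θ ∩ PolB σ := by
    constructor
    · intro u v h
      show (u (Fin.succ (r (u 0))), v (Fin.succ (r (v 0)))) ∈ θ
      rw [hrc _ _ (h 0)]
      exact h _
    · intro u v h
      show (u (Fin.succ (r (u 0))), v (Fin.succ (r (v 0)))) ∈ σ
      rw [hrc _ _ (hsub (h 0))]
      exact h _
  set inner : Fin (k + 1) → (Fin n → Fin k) → Fin k :=
    fun j => Fin.cases δ (fun t => fun x => if (G x, t) ∈ θ then G x else t) j with hinner
  have hinnerF : ∀ j, (⟨n, inner j⟩ : Ops k) ∈ F := by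
    intro j
    refine Fin.cases ?_ ?_ j
    · simp only [hinner, Fin.cases_zero]
      exact hCF hδC
    · intro t
      simp only [hinner, Fin.cases_succ]
      exact hGt t
  have hcomp := hF.2 (k + 1) n s inner (hCF hsC) hinnerF
  have heq : (fun x : Fin n → Fin k => s fun i => inner i x) = G := by
    funext x
    have hGδ : (G x, δ x) ∈ θ :=
      hθt _ _ _ (hg x (fun i => r (x i)) fun i => hrθ (x i)) (hrθ _)
    have h2 : (G x, r (δ x)) ∈ θ := hθt _ _ _ hGδ (hrθ _)
    simp only [hs, hinner, Fin.cases_zero, Fin.cases_succ]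
    rw [if_pos h2]
  rw [← heq]
  exact hcomp

/-- For incomparable nontrivial equivalence relations `ρ`, `θ` with
`ρ ∩ θ ≠ Δ`: `Pol(θ) ∩ Pol(ρ) ⊊ Pol(θ) ∩ Pol(ρ ∩ θ) ⊊ Pol(θ)`,
`Pol(θ) ∩ Pol(ρ ∩ θ)` is maximal in `Pol(θ)`, and `Pol(θ) ∩ Pol(ρ)`
is not maximal in `Pol(θ)`. -/
theorem stmt6 (k : ℕ) (θ ρ : Set (Fin k × Fin k))
    (hθ : NontrivEquiv θ) (hρ : NontrivEquiv ρ)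
    (hinc1 : ¬ ρ ⊆ θ) (hinc2 : ¬ θ ⊆ ρ)
    (hne : ρ ∩ θ ≠ diag k) :
    (PolB θ ∩ PolB ρ ⊂ PolB θ ∩ PolB (ρ ∩ θ)) ∧
    (PolB θ ∩ PolB (ρ ∩ θ) ⊂ PolB θ) ∧
    MaximalIn (PolB θ ∩ PolB (ρ ∩ θ)) (PolB θ) ∧
    ¬ MaximalIn (PolB θ ∩ PolB ρ) (PolB θ) := by
  obtain ⟨⟨hθr, hθs, hθt⟩, hθd, hθu⟩ := hθ
  obtain ⟨⟨hρr, hρs, hρt⟩, hρd, hρu⟩ := hρ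
  have hσE : IsEquivRel (ρ ∩ θ) :=
    ⟨fun a => ⟨hρr a, hθr a⟩, fun a b h => ⟨hρs _ _ h.1, hθs _ _ h.2⟩,
      fun a b c h h' => ⟨hρt _ _ _ h.1 h'.1, hθt _ _ _ h.2 h'.2⟩⟩
  have hsubσθ : ρ ∩ θ ⊆ θ := Set.inter_subset_right
  -- witnesses
  obtain ⟨ab, habρ, habθn⟩ := Set.not_subset.mp hinc1
  obtain ⟨pq, hpqθ, hpqρn⟩ := Set.not_subset.mp hinc2
  obtain ⟨pq', -, hpq'n⟩ := Set.exists_of_ssubset hρu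
  have hdiagσ : diag k ⊆ ρ ∩ θ := by
    rintro ⟨z1, z2⟩ hz
    have hz' : z1 = z2 := hz
    subst hz'
    exact ⟨hρr z1, hθr z1⟩
  obtain ⟨cd, hcdσ, hcdd⟩ := Set.exists_of_ssubset (hdiagσ.ssubset_of_ne (Ne.symm hne))
  have hcdne : cd.1 ≠ cd.2 := hcdd
  -- f₁ : in Pol θ ∩ Pol (ρ∩θ) but not in Pol ρ
  set f₁ : Ops k := ⟨1, fun x : Fin 1 → Fin k => if (x 0, ab.1) ∈ θ then pq'.1 else pq'.2⟩
    with hf₁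
  have hf₁σ : f₁ ∈ PolB θ ∩ PolB (ρ ∩ θ) := by
    have hgen : ∀ (γ : Set (Fin k × Fin k)), (∀ z, (z, z) ∈ γ) → γ ⊆ θ → f₁ ∈ PolB γ := by
      intro γ hγr hγθ u v huv
      show ((if (u 0, ab.1) ∈ θ then pq'.1 else pq'.2 : Fin k),
        (if (v 0, ab.1) ∈ θ then pq'.1 else pq'.2 : Fin k)) ∈ γ
      have hiff : (u 0, ab.1) ∈ θ ↔ (v 0, ab.1) ∈ θ :=
        ⟨fun h => hθt _ _ _ (hθs _ _ (hγθ (huv 0))) h, fun h => hθt _ _ _ (hγθ (huv 0)) h⟩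
      by_cases h : (u 0, ab.1) ∈ θ
      · rw [if_pos h, if_pos (hiff.mp h)]; exact hγr _
      · rw [if_neg h, if_neg fun h' => h (hiff.mpr h')]; exact hγr _
    exact ⟨hgen θ hθr le_rfl, hgen (ρ ∩ θ) (fun z => ⟨hρr z, hθr z⟩) hsubσθ⟩
  have hf₁ρ : f₁ ∉ PolB ρ := by
    intro h
    have := h (fun _ => ab.1) (fun _ => ab.2) (fun _ => habρ)
    have hba : ((ab.2 : Fin k), ab.1) ∉ θ := fun h' => habθn (hθs _ _ h')
    rw [show (f₁.2 fun _ => ab.1) = pq'.1 from if_pos (hθr ab.1),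
      show (f₁.2 fun _ => ab.2) = pq'.2 from if_neg hba] at this
    exact hpq'n this
  -- f₂ : in Pol θ but not in Pol (ρ∩θ)
  set f₂ : Ops k := ⟨1, fun x : Fin 1 → Fin k => if x 0 = cd.1 then pq.1 else pq.2⟩ with hf₂
  have hf₂θ : f₂ ∈ PolB θ := by
    intro u v _
    show ((if u 0 = cd.1 then pq.1 else pq.2 : Fin k),
      (if v 0 = cd.1 then pq.1 else pq.2 : Fin k)) ∈ θ
    split_ifs
    · exact hθr _
    · exact hpqθ
    · exact hθs _ _ hpqθ
    · exact hθr _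
  have hf₂σ : f₂ ∉ PolB (ρ ∩ θ) := by
    intro h
    have := h (fun _ => cd.1) (fun _ => cd.2) (fun _ => hcdσ)
    rw [show (f₂.2 fun _ => cd.1) = pq.1 from if_pos rfl,
      show (f₂.2 fun _ => cd.2) = pq.2 from if_neg (Ne.symm hcdne)] at this
    exact hpqρn this.1
  -- the two strict inclusions
  have hsub1 : PolB θ ∩ PolB ρ ⊆ PolB θ ∩ PolB (ρ ∩ θ) := by
    rintro x ⟨hxθ, hxρ⟩
    exact ⟨hxθ, fun u v h => ⟨hxρ u v fun i => (h i).1, hxθ u v fun i => (h i).2⟩⟩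
  have hss1 : PolB θ ∩ PolB ρ ⊂ PolB θ ∩ PolB (ρ ∩ θ) := by
    refine ⟨hsub1, fun hsup => ?_⟩
    exact hf₁ρ (hsup hf₁σ).2
  have hss2 : PolB θ ∩ PolB (ρ ∩ θ) ⊂ PolB θ := by
    refine ⟨Set.inter_subset_left, fun hsup => ?_⟩
    exact hf₂σ (hsup hf₂θ).2
  refine ⟨hss1, hss2, ⟨hss2, ?_⟩, ?_⟩
  · rintro F hFc ⟨h1, h2⟩
    obtain ⟨f, hfF, hfC⟩ := Set.exists_of_ssubset h1
    have hfθ : f ∈ PolB θ := h2.subset hfF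
    have hfσ : f ∉ PolB (ρ ∩ θ) := fun hσ => hfC ⟨hfθ, hσ⟩
    have hall := key_gen θ (ρ ∩ θ) ⟨hθr, hθs, hθt⟩ hσE hsubσθ F hFc h1.subset f hfF hfθ hfσ
    exact h2.not_subset hall
  · rintro ⟨-, hmax⟩
    exact hmax (PolB θ ∩ PolB (ρ ∩ θ))
      (inter_isClone (polB_isClone θ) (polB_isClone (ρ ∩ θ))) ⟨hss1, hss2⟩
end
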